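/- Let V be a normed vector space (over ℝ) with a direct sum decomposition V = V₁ ⊕ V₂ (write v = v^∥ + v^⊥ for v^∥ ∈ V₁, v^⊥ ∈ V₂), and let A: V → V be a linear map such that: (i) A(V₁) ⊆ V₁ with ‖A v‖ ≥ 2‖v‖ for all v ∈ V₁; (ii) (A v)^⊥ = (2m+1)·v^⊥ for all v ∈ V₂, where m ≥ 1; (iii) ‖(A v)^∥‖ ≤ K‖v‖ for all v ∈ V₂, where K > 0. Define |||v||| = max((1/K)‖v^∥‖, ‖v^⊥‖). Then |||A v||| > |||v||| for all nonzero v ∈ V. -/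

import Mathlib

/-! If `|||v|||` is attained by the `V₂`-component, that component is multiplied by
`2m + 1 > 1`. Otherwise `‖v^∥‖ > K ‖v^⊥‖`, and the `V₁`-component of `A v` has norm at least
`2 ‖v^∥‖ - K ‖v^⊥‖ > ‖v^∥‖`: the leak from `V₂` cannot cancel the doubling on `V₁`. -/

lemma max_inv_mul_lt_max_inv_mul {K c a b a' b' : ℝ} (hK : 0 < K) (hc : 1 < c)
    (hpos : 0 < max (K⁻¹ * a) b) (ha' : 2 * a - K * b ≤ a') (hb' : c * b ≤ b') :
    max (K⁻¹ * a) b < max (K⁻¹ * a') b' := by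
  rcases le_or_gt (K⁻¹ * a) b with h | h
  · have hb : 0 < b := by rwa [max_eq_right h] at hpos
    rw [max_eq_right h]
    calc b < c * b := lt_mul_left hb hc
      _ ≤ b' := hb'
      _ ≤ _ := le_max_right _ _
  · have hKb : K * b < a := by rwa [lt_inv_mul_iff₀ hK] at h
    rw [max_eq_left h.le]
    calc K⁻¹ * a < K⁻¹ * a' := by gcongr; linarith
      _ ≤ _ := le_max_left _ _

section Decomposition

variable {V : Type*} [NormedAddCommGroup V] [NormedSpace ℝ V] {P Q A : V →ₗ[ℝ] V}

lemma max_inv_mul_norm_pos (hPQ : ∀ v, P v + Q v = v) {K : ℝ} (hK : 0 < K) {v : V}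
    (hv : v ≠ 0) : 0 < max (K⁻¹ * ‖P v‖) ‖Q v‖ := by
  by_contra! h
  have hP : P v = 0 :=
    norm_le_zero_iff.mp (by simpa using (inv_mul_le_iff₀ hK).mp (le_of_max_le_left h))
  have hQ : Q v = 0 := norm_le_zero_iff.mp (le_of_max_le_right h)
  exact hv (by rw [← hPQ v, hP, hQ, add_zero])

lemma map_eq_map_proj_add_map_proj (hPQ : ∀ v, P v + Q v = v) (v : V) : A v = A (P v) + A (Q v) := by
  rw [← map_add, hPQ]

variable (hPQ : ∀ v, P v + Q v = v) (hA1 : ∀ v, Q (A (P v)) = 0)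
include hPQ hA1

lemma proj_map_eq_smul {c : ℝ} (hA2 : ∀ v, Q (A (Q v)) = c • Q v) (v : V) :
    Q (A v) = c • Q v := by
  rw [map_eq_map_proj_add_map_proj (A := A) hPQ v, map_add, hA1, hA2, zero_add]

lemma two_mul_norm_sub_le_norm_proj_map {K : ℝ} (hA1' : ∀ v, 2 * ‖P v‖ ≤ ‖A (P v)‖)
    (hA3 : ∀ v, ‖P (A (Q v))‖ ≤ K * ‖Q v‖) (v : V) :
    2 * ‖P v‖ - K * ‖Q v‖ ≤ ‖P (A v)‖ := by
  have hAP : P (A (P v)) = A (P v) := by simpa [hA1] using hPQ (A (P v))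
  have hPA : P (A v) = A (P v) + P (A (Q v)) := by
    rw [map_eq_map_proj_add_map_proj (A := A) hPQ v, map_add, hAP]
  calc 2 * ‖P v‖ - K * ‖Q v‖ ≤ ‖A (P v)‖ - ‖P (A (Q v))‖ := by linarith [hA1' v, hA3 v]
    _ ≤ ‖P (A v)‖ := by rw [hPA]; exact norm_sub_le_norm_add _ _

end Decomposition

theorem stmt1_general {V : Type*} [NormedAddCommGroup V] [NormedSpace ℝ V]
    (P Q : V →ₗ[ℝ] V)
    (hPQ : ∀ v, P v + Q v = v)
    (A : V →ₗ[ℝ] V) (m : ℕ) (hm : 1 ≤ m) (K : ℝ) (hK : 0 < K)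
    -- (i) `A(V₁) ⊆ V₁` and `‖A v‖ ≥ 2‖v‖` on `V₁`
    (hA1 : ∀ v, Q (A (P v)) = 0)
    (hA1' : ∀ v, 2 * ‖P v‖ ≤ ‖A (P v)‖)
    -- (ii) `(A v)^⊥ = (2m+1) v^⊥` on `V₂`
    (hA2 : ∀ v, Q (A (Q v)) = ((2 * (m : ℝ) + 1)) • Q v)
    -- (iii) `‖(A v)^∥‖ ≤ K ‖v‖` on `V₂`
    (hA3 : ∀ v, ‖P (A (Q v))‖ ≤ K * ‖Q v‖) :
    ∀ v : V, v ≠ 0 →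
      max (K⁻¹ * ‖P v‖) ‖Q v‖ < max (K⁻¹ * ‖P (A v)‖) ‖Q (A v)‖ := by
  intro v hv
  have hc : 1 < 2 * (m : ℝ) + 1 := by
    have : (1 : ℝ) ≤ m := by exact_mod_cast hm
    linarith
  refine max_inv_mul_lt_max_inv_mul hK hc (max_inv_mul_norm_pos hPQ hK hv)
    (two_mul_norm_sub_le_norm_proj_map hPQ hA1 hA1' hA3 v) ?_
  rw [proj_map_eq_smul hPQ hA1 hA2, norm_smul, Real.norm_of_nonneg (by positivity)]

/-- the cone argument. `V = V₁ ⊕ V₂` is encoded by complementary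
projections `P` (onto `V₁`, `v ↦ v^∥`) and `Q` (onto `V₂`, `v ↦ v^⊥`).
If a linear map `A` preserves `V₁` expanding it by factor `2`, acts on the `V₂`-component
by multiplication by `2m+1` (`m ≥ 1`), and leaks from `V₂` into `V₁` with norm at most `K`,
then `A` strictly expands the Finsler norm `|||v||| = max(K⁻¹‖v^∥‖, ‖v^⊥‖)` on nonzero
vectors. -/
theorem stmt1 {V : Type*} [NormedAddCommGroup V] [NormedSpace ℝ V]
    (P Q : V →ₗ[ℝ] V)
    (hPQ : ∀ v, P v + Q v = v)
    (hPP : ∀ v, P (P v) = P v) (hQQ : ∀ v, Q (Q v) = Q v)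
    (hPQ0 : ∀ v, P (Q v) = 0) (hQP0 : ∀ v, Q (P v) = 0)
    (A : V →ₗ[ℝ] V) (m : ℕ) (hm : 1 ≤ m) (K : ℝ) (hK : 0 < K)
    -- (i) `A(V₁) ⊆ V₁` and `‖A v‖ ≥ 2‖v‖` on `V₁`
    (hA1 : ∀ v, Q (A (P v)) = 0)
    (hA1' : ∀ v, 2 * ‖P v‖ ≤ ‖A (P v)‖)
    -- (ii) `(A v)^⊥ = (2m+1) v^⊥` on `V₂`
    (hA2 : ∀ v, Q (A (Q v)) = ((2 * (m : ℝ) + 1)) • Q v)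
    -- (iii) `‖(A v)^∥‖ ≤ K ‖v‖` on `V₂`
    (hA3 : ∀ v, ‖P (A (Q v))‖ ≤ K * ‖Q v‖) :
    ∀ v : V, v ≠ 0 →
      max (K⁻¹ * ‖P v‖) ‖Q v‖ < max (K⁻¹ * ‖P (A v)‖) ‖Q (A v)‖ :=
  stmt1_general P Q hPQ A m hm K hK hA1 hA1' hA2 hA3
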